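/- arXiv:0906.0107 — 2 statements merged into one kernel-verified Lean document; each statement's English description precedes it below -/
import Mathlib

section
/- For the function v₁(t) = ∫_ℝ dτ / √((1+τ²)(1+(t-τ)²)), the derivative bound |v₁'(t)| ≤ (4/|t|) · v₁(t) holds for every t ≠ 0. -/
open MeasureTheory

noncomputable def v1 (t : ℝ) : ℝ :=
  ∫ τ : ℝ, (Real.sqrt ((1 + τ ^ 2) * (1 + (t - τ) ^ 2)))⁻¹

/-
With `f x = (1 + x ^ 2)^(-1/2)` (`bracketInv`), `v1 = f ⋆ f` and `v1' = f ⋆ f'`. Since `f` is even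
and `f'` odd, symmetrising in the integration variable gives
`2 v1 t = ∫ f u (f (t - u) + f (t + u))` and `2 v1' t = ∫ f' u (f (t - u) - f (t + u))`,
so it suffices to compare the integrands. Writing `a = f (t - u)`, `b = f (t + u)`, one has
`a ^ 2 - b ^ 2 = 4 t u a ^ 2 b ^ 2`, and the factor `t` this produces is absorbed by whichever of
`a`, `b` belongs to the point `t ± u` with `|t ± u| ≥ |t|`.
-/

noncomputable def bracketInv (x : ℝ) : ℝ := (√(1 + x ^ 2))⁻¹

noncomputable def bracketInvDeriv (x : ℝ) : ℝ := -x * bracketInv x ^ 3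

section bracketInv

variable (x : ℝ)

lemma bracketInv_pos : 0 < bracketInv x := by unfold bracketInv; positivity

lemma bracketInv_le_one : bracketInv x ≤ 1 :=
  inv_le_one_of_one_le₀ <| Real.one_le_sqrt.2 <| by nlinarith

lemma bracketInv_sq : bracketInv x ^ 2 = (1 + x ^ 2)⁻¹ := by
  rw [bracketInv, inv_pow, Real.sq_sqrt (by positivity)]

lemma bracketInv_sq_mul : bracketInv x ^ 2 * (1 + x ^ 2) = 1 := by
  rw [bracketInv_sq, inv_mul_cancel₀ (by positivity)]

lemma sq_mul_bracketInv_sq_le_one : x ^ 2 * bracketInv x ^ 2 ≤ 1 := by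
  nlinarith [bracketInv_sq_mul x, sq_nonneg (bracketInv x)]

@[simp] lemma bracketInv_neg : bracketInv (-x) = bracketInv x := by simp [bracketInv]

@[simp] lemma bracketInvDeriv_neg : bracketInvDeriv (-x) = -bracketInvDeriv x := by
  simp [bracketInvDeriv]

lemma abs_bracketInvDeriv : |bracketInvDeriv x| = |x| * bracketInv x ^ 3 := by
  rw [bracketInvDeriv, abs_mul, abs_neg, abs_of_pos (pow_pos (bracketInv_pos x) 3)]

lemma abs_bracketInvDeriv_le : |bracketInvDeriv x| ≤ bracketInv x ^ 2 := by
  have hx : |x| * bracketInv x ≤ 1 := by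
    rw [← abs_of_pos (bracketInv_pos x), ← abs_mul, ← sq_le_one_iff_abs_le_one, mul_pow]
    exact sq_mul_bracketInv_sq_le_one x
  calc |bracketInvDeriv x| = (|x| * bracketInv x) * bracketInv x ^ 2 := by
        rw [abs_bracketInvDeriv]; ring
    _ ≤ bracketInv x ^ 2 := mul_le_of_le_one_left (by positivity) hx

lemma hasDerivAt_bracketInv : HasDerivAt bracketInv (bracketInvDeriv x) x := by
  have h : HasDerivAt bracketInv _ x :=
    (((hasDerivAt_pow 2 x).const_add 1).sqrt (by positivity)).inv
      (Real.sqrt_pos.2 (by positivity)).ne'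
  refine h.congr_deriv ?_
  unfold bracketInvDeriv bracketInv
  field_simp
  norm_num

end bracketInv

@[fun_prop] lemma continuous_bracketInv : Continuous bracketInv :=
  continuous_iff_continuousAt.2 fun x => (hasDerivAt_bracketInv x).continuousAt

@[fun_prop] lemma continuous_bracketInvDeriv : Continuous bracketInvDeriv := by
  unfold bracketInvDeriv; fun_prop

lemma memLp_two_bracketInv : MemLp bracketInv 2 := by
  refine (memLp_two_iff_integrable_sq continuous_bracketInv.aestronglyMeasurable).2 ?_
  simpa only [bracketInv_sq] using integrable_inv_one_add_sq

lemma integrable_bracketInv_mul_comp_sub (t : ℝ) :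
    Integrable fun u => bracketInv u * bracketInv (t - u) :=
  memLp_two_bracketInv.integrable_mul
    (memLp_two_bracketInv.comp_measurePreserving (volume.measurePreserving_sub_left t))

lemma integrable_comp_sub_mul_bracketInvDeriv (t : ℝ) :
    Integrable fun u => bracketInv (t - u) * bracketInvDeriv u := by
  refine Integrable.bdd_mul (c := 1) ?_ (by fun_prop) (ae_of_all _ fun u => ?_)
  · refine Integrable.mono' (memLp_two_bracketInv.integrable_sq) (by fun_prop) (ae_of_all _ ?_)
    exact abs_bracketInvDeriv_le
  · rw [Real.norm_of_nonneg (bracketInv_pos _).le]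
    exact bracketInv_le_one _

lemma bracketInv_sq_le_three_mul {x y : ℝ} (h : |x - y| ≤ 1) :
    bracketInv x ^ 2 ≤ 3 * bracketInv y ^ 2 := by
  have hxy : 1 + y ^ 2 ≤ 3 * (1 + x ^ 2) := by
    nlinarith [(sq_le_one_iff_abs_le_one _).2 h, sq_nonneg (2 * x - y)]
  calc bracketInv x ^ 2 = (1 + x ^ 2)⁻¹ := bracketInv_sq x
    _ ≤ ((1 + y ^ 2) / 3)⁻¹ := by gcongr; linarith
    _ = 3 * bracketInv y ^ 2 := by rw [inv_div, bracketInv_sq, div_eq_mul_inv]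

lemma v1_eq_integral (t : ℝ) : v1 t = ∫ τ, bracketInv τ * bracketInv (t - τ) := by
  simp only [v1, bracketInv, Real.sqrt_mul (by positivity : (0 : ℝ) ≤ 1 + _ ^ 2), mul_inv]

lemma hasDerivAt_v1 (t : ℝ) : HasDerivAt v1 (∫ u, bracketInv (t - u) * bracketInvDeriv u) t := by
  rw [← integral_sub_left_eq_self _ volume t]
  simp only [sub_sub_cancel]
  have h := hasDerivAt_integral_of_dominated_loc_of_deriv_le
    (F := fun s τ => bracketInv τ * bracketInv (s - τ))
    (F' := fun s τ => bracketInv τ * bracketInvDeriv (s - τ))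
    (bound := fun τ => 3 * bracketInv (t - τ) ^ 2) (μ := volume)
    (Metric.closedBall_mem_nhds t one_pos) (.of_forall fun s => by fun_prop)
    (integrable_bracketInv_mul_comp_sub t) (by fun_prop) ?_
    ((memLp_two_bracketInv.integrable_sq.comp_sub_left t).const_mul 3) ?_
  · simpa only [← v1_eq_integral] using h.2
  · refine ae_of_all _ fun τ s hs => ?_
    rw [norm_mul, Real.norm_of_nonneg (bracketInv_pos τ).le, Real.norm_eq_abs]
    calc bracketInv τ * |bracketInvDeriv (s - τ)| ≤ 1 * bracketInv (s - τ) ^ 2 :=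
          mul_le_mul (bracketInv_le_one τ) (abs_bracketInvDeriv_le _) (abs_nonneg _) zero_le_one
      _ ≤ 3 * bracketInv (t - τ) ^ 2 := by
          rw [one_mul]
          refine bracketInv_sq_le_three_mul ?_
          rwa [sub_sub_sub_cancel_right, ← Real.dist_eq, ← Metric.mem_closedBall]
  · exact ae_of_all _ fun τ s _ =>
      ((hasDerivAt_bracketInv (s - τ)).comp s ((hasDerivAt_id s).sub_const τ)).const_mul _
        |>.congr_deriv (by simp)

lemma integral_add_comp_neg {E : Type*} [NormedAddCommGroup E] [NormedSpace ℝ E] {f : ℝ → E}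
    (hf : Integrable f) : ∫ u, (f u + f (-u)) = (2 : ℝ) • ∫ u, f u := by
  rw [integral_add hf hf.comp_neg, integral_neg_eq_self, two_smul]

lemma integrable_bracketInv_mul_add (t : ℝ) :
    Integrable fun u => bracketInv u * (bracketInv (t - u) + bracketInv (t + u)) := by
  have h := integrable_bracketInv_mul_comp_sub t
  refine (h.add h.comp_neg).congr (ae_of_all _ fun u => ?_)
  simp only [Pi.add_apply, mul_add, bracketInv_neg, sub_neg_eq_add]

lemma two_mul_v1 (t : ℝ) :
    2 * v1 t = ∫ u, bracketInv u * (bracketInv (t - u) + bracketInv (t + u)) := by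
  rw [v1_eq_integral, ← smul_eq_mul, ← integral_add_comp_neg (integrable_bracketInv_mul_comp_sub t)]
  simp only [mul_add, bracketInv_neg, sub_neg_eq_add]

lemma two_mul_deriv_v1 (t : ℝ) :
    2 * deriv v1 t = ∫ u, bracketInvDeriv u * (bracketInv (t - u) - bracketInv (t + u)) := by
  rw [(hasDerivAt_v1 t).deriv, ← smul_eq_mul,
    ← integral_add_comp_neg (integrable_comp_sub_mul_bracketInvDeriv t)]
  simp only [mul_sub, bracketInvDeriv_neg, sub_neg_eq_add]
  congr with u
  ring

lemma sq_mul_sq_mul_bracketInv_sq_le (t u : ℝ) :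
    t ^ 2 * u ^ 2 * (bracketInv (t - u) ^ 2 * bracketInv (t + u) ^ 2) ≤
      (1 + u ^ 2) * (bracketInv (t - u) + bracketInv (t + u)) ^ 2 := by
  wlog h : t ^ 2 ≤ (t + u) ^ 2 generalizing u
  · have := this (-u) (by nlinarith [sq_nonneg u])
    simpa only [sub_neg_eq_add, ← sub_eq_add_neg, neg_sq, mul_comm (bracketInv (t + u) ^ 2),
      add_comm (bracketInv (t + u))] using this
  have ha := (bracketInv_pos (t - u)).le
  have hb := (bracketInv_pos (t + u)).le
  have htb : t ^ 2 * bracketInv (t + u) ^ 2 ≤ 1 :=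
    (mul_le_mul_of_nonneg_right h (by positivity)).trans (sq_mul_bracketInv_sq_le_one _)
  calc t ^ 2 * u ^ 2 * (bracketInv (t - u) ^ 2 * bracketInv (t + u) ^ 2)
      = (t ^ 2 * bracketInv (t + u) ^ 2) * u ^ 2 * bracketInv (t - u) ^ 2 := by ring
    _ ≤ 1 * (1 + u ^ 2) * (bracketInv (t - u) + bracketInv (t + u)) ^ 2 := by
        gcongr <;> linarith [sq_nonneg u]
    _ = _ := by rw [one_mul]

lemma abs_bracketInvDeriv_mul_sub_le {t : ℝ} (ht : t ≠ 0) (u : ℝ) :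
    |bracketInvDeriv u * (bracketInv (t - u) - bracketInv (t + u))| ≤
      4 / |t| * (bracketInv u * (bracketInv (t - u) + bracketInv (t + u))) := by
  set a := bracketInv (t - u)
  set b := bracketInv (t + u)
  set c := bracketInv u
  have hab : 0 < a + b := add_pos (bracketInv_pos _) (bracketInv_pos _)
  have hc : 0 < c := bracketInv_pos u
  have hsq : (a - b) * (a + b) = 4 * t * u * (a ^ 2 * b ^ 2) := by
    linear_combination b ^ 2 * bracketInv_sq_mul (t - u) - a ^ 2 * bracketInv_sq_mul (t + u)
  have hdiff : |a - b| * (a + b) = 4 * |t| * |u| * (a ^ 2 * b ^ 2) := by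
    rw [← abs_of_pos hab, ← abs_mul, hsq, abs_mul, abs_mul, abs_mul,
      abs_of_nonneg (by positivity : (0 : ℝ) ≤ a ^ 2 * b ^ 2), abs_of_pos four_pos]
  rw [abs_mul, abs_bracketInvDeriv, div_mul_eq_mul_div, le_div_iff₀ (abs_pos.2 ht)]
  refine le_of_mul_le_mul_right ?_ hab
  calc |u| * c ^ 3 * |a - b| * |t| * (a + b)
      = 4 * c * (c ^ 2 * (t ^ 2 * u ^ 2 * (a ^ 2 * b ^ 2))) := by
        linear_combination |u| * c ^ 3 * |t| * hdiff +
          4 * c ^ 3 * (a ^ 2 * b ^ 2) * (|u| ^ 2 * sq_abs t + t ^ 2 * sq_abs u)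
    _ ≤ 4 * c * (c ^ 2 * ((1 + u ^ 2) * (a + b) ^ 2)) := by
        gcongr 4 * c * (c ^ 2 * ?_)
        exact sq_mul_sq_mul_bracketInv_sq_le t u
    _ = 4 * (c * (a + b)) * (a + b) := by
        linear_combination 4 * c * (a + b) ^ 2 * bracketInv_sq_mul u

theorem abs_deriv_v1_le :
    ∀ t : ℝ, t ≠ 0 → |deriv v1 t| ≤ (4 / |t|) * v1 t := by
  intro t ht
  have h := norm_integral_le_of_norm_le ((integrable_bracketInv_mul_add t).const_mul (4 / |t|))
    (ae_of_all _ fun u => (Real.norm_eq_abs _).trans_le (abs_bracketInvDeriv_mul_sub_le ht u))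
  rw [integral_const_mul, ← two_mul_v1, ← two_mul_deriv_v1, Real.norm_eq_abs, abs_mul,
    abs_two] at h
  linarith
end

section
/- Let v(t) = v₁(arcosh t) for t ≥ 1, with v₁(t) = ∫_ℝ dτ/√((1+τ²)(1+(t-τ)²)). For every ε ∈ (0,1) there exists c₃ > 0 such that for all a, y₁, y₂ with ε ≤ a ≤ 1, y₁ > 0, y₂ > 0, y₁ + y₂ ≤ 1: v((y₁+a)/(2√(y₁a))) · v((a+y₂)/(2√(a y₂))) ≤ c₃ · v((y₁+y₂)/(2√(y₁y₂))). -/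
open MeasureTheory

noncomputable def v (t : ℝ) : ℝ := v1 (Real.log (t + Real.sqrt (t ^ 2 - 1)))

/-!
Since `(p + q) / (2 √(p q)) = cosh ((log p - log q) / 2)` and `v (cosh s) = v1 s`, the three
factors are `v1 s₁`, `v1 s₂` and `v1 (s₁ + s₂)` with `s₁ = (log y₁ - log a) / 2` and
`s₂ = (log a - log y₂) / 2`. On `[0, ∞)`, `v1` is comparable to
`logProfile s = (1 + log (1 + s)) / (1 + s)`: the lower bound comes from integrating over
`[0, s + 1]`, the upper one from the symmetry of the integrand about `s / 2` and a split of
`(-∞, s / 2]` at `-s / 2`. Since `logProfile` is antitone and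
`logProfile x * logProfile y ≤ 2 * logProfile (x + y)`, and `v1` is even, this gives
`v1 x * v1 y ≤ C * v1 (x + y)` with an absolute constant `C`.
-/

open Real Set

lemma inv_sqrt_mul_le_half_add_inv {a b : ℝ} (ha : 0 < a) (hb : 0 < b) :
    (√(a * b))⁻¹ ≤ (a⁻¹ + b⁻¹) / 2 := by
  rw [← sqrt_inv, mul_inv, sqrt_le_iff]
  exact ⟨by positivity, by nlinarith [sq_nonneg (a⁻¹ - b⁻¹)]⟩

lemma inv_sqrt_mul_le_inv_of_le {a b : ℝ} (ha : 0 < a) (hab : a ≤ b) :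
    (√(a * b))⁻¹ ≤ a⁻¹ :=
  inv_anti₀ ha ((le_sqrt' ha).2 (by nlinarith))

lemma inv_sqrt_mul_le_of_sq_le {a b c : ℝ} (ha : 0 < a) (hc : 0 < c) (hcb : c ^ 2 ≤ b) :
    (√(a * b))⁻¹ ≤ c⁻¹ * (√a)⁻¹ := by
  rw [← mul_inv, sqrt_mul ha.le, mul_comm c]
  exact inv_anti₀ (by positivity)
    (mul_le_mul_of_nonneg_left ((le_sqrt' hc).2 hcb) (sqrt_nonneg a))

lemma arctan_le_self {x : ℝ} (hx : 0 ≤ x) : arctan x ≤ x := by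
  simpa only [tan_arctan] using le_tan (arctan_nonneg.2 hx) (arctan_lt_pi_div_two x)

lemma arsinh_le_log_one_add_two_mul {x : ℝ} (hx : 0 ≤ x) : arsinh x ≤ log (1 + 2 * x) := by
  have hsqrt : √(1 + x ^ 2) ≤ 1 + x := sqrt_le_iff.2 ⟨by linarith, by nlinarith⟩
  exact log_le_log (by positivity) (by linarith)

lemma continuous_inv_sqrt_one_add_sq : Continuous fun x : ℝ => (√(1 + x ^ 2))⁻¹ :=
  (by fun_prop : Continuous fun x : ℝ => √(1 + x ^ 2)).inv₀
    fun x => (sqrt_pos.2 (by positivity)).ne'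

lemma integral_inv_sqrt_one_add_sq (a b : ℝ) :
    ∫ x in a..b, (√(1 + x ^ 2))⁻¹ = arsinh b - arsinh a :=
  intervalIntegral.integral_eq_sub_of_hasDerivAt (fun x _ => hasDerivAt_arsinh x)
    (continuous_inv_sqrt_one_add_sq.intervalIntegrable a b)

noncomputable def v1Kernel (t τ : ℝ) : ℝ := (√((1 + τ ^ 2) * (1 + (t - τ) ^ 2)))⁻¹

lemma v1_eq_integral_v1Kernel (t : ℝ) : v1 t = ∫ τ, v1Kernel t τ := rfl

lemma v1Kernel_nonneg (t τ : ℝ) : 0 ≤ v1Kernel t τ := by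
  unfold v1Kernel; positivity

lemma v1Kernel_sub_left (t τ : ℝ) : v1Kernel t (t - τ) = v1Kernel t τ := by
  rw [v1Kernel, v1Kernel, sub_sub_cancel, mul_comm]

lemma v1Kernel_le (t τ : ℝ) :
    v1Kernel t τ ≤ ((1 + τ ^ 2)⁻¹ + (1 + (t - τ) ^ 2)⁻¹) / 2 :=
  inv_sqrt_mul_le_half_add_inv (by positivity) (by positivity)

lemma continuous_v1Kernel (t : ℝ) : Continuous (v1Kernel t) :=
  (by fun_prop : Continuous fun τ : ℝ => √((1 + τ ^ 2) * (1 + (t - τ) ^ 2))).inv₀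
    fun τ => (sqrt_pos.2 (by positivity)).ne'

lemma integrable_v1Kernel (t : ℝ) : Integrable (v1Kernel t) := by
  have hmaj : Integrable fun τ : ℝ => ((1 + τ ^ 2)⁻¹ + (1 + (t - τ) ^ 2)⁻¹) / 2 :=
    (integrable_inv_one_add_sq.add (integrable_inv_one_add_sq.comp_sub_left t)).div_const 2
  refine hmaj.mono' (continuous_v1Kernel t).aestronglyMeasurable (ae_of_all _ fun τ => ?_)
  rw [norm_of_nonneg (v1Kernel_nonneg t τ)]
  exact v1Kernel_le t τ

lemma v1_nonneg (t : ℝ) : 0 ≤ v1 t :=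
  integral_nonneg (v1Kernel_nonneg t)

lemma v1_le_pi (t : ℝ) : v1 t ≤ π := by
  have hshift : ∫ τ, (1 + (t - τ) ^ 2)⁻¹ = π :=
    (integral_sub_left_eq_self (fun x : ℝ => (1 + x ^ 2)⁻¹) volume t).trans
      integral_univ_inv_one_add_sq
  calc v1 t ≤ ∫ τ, ((1 + τ ^ 2)⁻¹ + (1 + (t - τ) ^ 2)⁻¹) / 2 :=
        integral_mono (integrable_v1Kernel t)
          ((integrable_inv_one_add_sq.add (integrable_inv_one_add_sq.comp_sub_left t)).div_const 2)
          (v1Kernel_le t)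
    _ = π := by
        rw [integral_div, integral_add integrable_inv_one_add_sq
          (integrable_inv_one_add_sq.comp_sub_left t), integral_univ_inv_one_add_sq, hshift]
        ring

lemma v1_neg (t : ℝ) : v1 (-t) = v1 t := by
  rw [v1, ← integral_neg_eq_self]
  congr 1
  ext τ
  rw [neg_sq, show -t - -τ = -(t - τ) by ring, neg_sq]

lemma v1_abs (t : ℝ) : v1 |t| = v1 t := by
  rcases abs_choice t with h | h <;> simp only [h, v1_neg]

lemma v1_eq_two_mul_setIntegral_Iic (t : ℝ) :
    v1 t = 2 * ∫ τ in Iic (t / 2), v1Kernel t τ := by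
  have hK := integrable_v1Kernel t
  have hreflect : ∫ τ in Ioi (t / 2), v1Kernel t τ = ∫ τ in Iic (t / 2), v1Kernel t τ := by
    have hpres := (Measure.measurePreserving_sub_left volume t).setIntegral_preimage_emb
      (measurableEmbedding_subLeft t) (v1Kernel t) (Iio (t / 2))
    rw [preimage_const_sub_Iio, sub_half] at hpres
    rw [integral_Iic_eq_integral_Iio, ← hpres]
    simp only [v1Kernel_sub_left]
  rw [v1_eq_integral_v1Kernel,
    ← intervalIntegral.integral_Iic_add_Ioi hK.integrableOn hK.integrableOn, hreflect, two_mul]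

section UpperBound

variable {t : ℝ}

lemma setIntegral_Iic_neg_half_v1Kernel_le (ht : 0 < t) :
    ∫ τ in Iic (-(t / 2)), v1Kernel t τ ≤ 2 / t := by
  calc ∫ τ in Iic (-(t / 2)), v1Kernel t τ ≤ ∫ τ in Iic (-(t / 2)), (1 + τ ^ 2)⁻¹ :=
        setIntegral_mono_on (integrable_v1Kernel t).integrableOn
          integrable_inv_one_add_sq.integrableOn measurableSet_Iic fun τ hτ =>
            inv_sqrt_mul_le_inv_of_le (by positivity) (by nlinarith [mem_Iic.1 hτ])
    _ = arctan (2 / t) := by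
        rw [integral_Iic_inv_one_add_sq, arctan_neg, ← inv_div, arctan_inv_of_pos (by positivity)]
        ring
    _ ≤ 2 / t := arctan_le_self (by positivity)

lemma intervalIntegral_v1Kernel_le (ht : 0 < t) :
    ∫ τ in -(t / 2)..t / 2, v1Kernel t τ ≤ 4 / t * arsinh (t / 2) := by
  calc ∫ τ in -(t / 2)..t / 2, v1Kernel t τ
        ≤ ∫ τ in -(t / 2)..t / 2, (t / 2)⁻¹ * (√(1 + τ ^ 2))⁻¹ :=
        intervalIntegral.integral_mono_on (by linarith) (integrable_v1Kernel t).intervalIntegrable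
          ((continuous_const.mul continuous_inv_sqrt_one_add_sq).intervalIntegrable _ _) fun τ hτ =>
            inv_sqrt_mul_le_of_sq_le (by positivity) (by positivity) (by nlinarith [hτ.2])
    _ = 4 / t * arsinh (t / 2) := by
        rw [intervalIntegral.integral_const_mul, integral_inv_sqrt_one_add_sq, arsinh_neg]
        ring

lemma v1_le_of_pos (ht : 0 < t) : v1 t ≤ 4 * (1 + 2 * log (1 + t)) / t := by
  have hK := integrable_v1Kernel t
  have hsplit := intervalIntegral.integral_Iic_sub_Iic (a := -(t / 2)) (b := t / 2)
    hK.integrableOn hK.integrableOn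
  have harsinh : arsinh (t / 2) ≤ log (1 + t) := by
    simpa only [mul_div_cancel₀ t two_ne_zero] using
      arsinh_le_log_one_add_two_mul (by positivity : 0 ≤ t / 2)
  have hlog : 4 / t * arsinh (t / 2) ≤ 4 / t * log (1 + t) := by gcongr
  rw [v1_eq_two_mul_setIntegral_Iic, show 4 * (1 + 2 * log (1 + t)) / t =
    2 * (2 / t + 4 / t * log (1 + t)) by ring]
  linarith [setIntegral_Iic_neg_half_v1Kernel_le ht, intervalIntegral_v1Kernel_le ht]

end UpperBound

lemma log_div_le_v1 {t : ℝ} (ht : 0 ≤ t) : log (2 + t) / (2 + t) ≤ v1 t := by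
  have hint : IntervalIntegrable (fun τ : ℝ => (1 + τ)⁻¹ * (2 + t)⁻¹) volume 0 (t + 1) := by
    refine (intervalIntegral.intervalIntegrable_inv (fun τ hτ => ?_) (by fun_prop)).mul_const _
    rw [uIcc_of_le (by linarith)] at hτ
    exact (by linarith [hτ.1] : 0 < 1 + τ).ne'
  calc log (2 + t) / (2 + t) = ∫ τ in (0 : ℝ)..t + 1, (1 + τ)⁻¹ * (2 + t)⁻¹ := by
        rw [intervalIntegral.integral_mul_const,
          intervalIntegral.integral_comp_add_left (fun x => x⁻¹) (1 : ℝ),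
          integral_inv_of_pos (by norm_num) (by linarith)]
        ring_nf
    _ ≤ ∫ τ in (0 : ℝ)..t + 1, v1Kernel t τ := by
        refine intervalIntegral.integral_mono_on (by linarith) hint
          (integrable_v1Kernel t).intervalIntegrable fun τ ⟨hτ₀, hτ₁⟩ => ?_
        rw [← mul_inv]
        refine inv_anti₀ (sqrt_pos.2 (by positivity)) (sqrt_le_iff.2 ⟨by positivity, ?_⟩)
        have hA : 1 + τ ^ 2 ≤ (1 + τ) ^ 2 := by nlinarith
        have hB : 1 + (t - τ) ^ 2 ≤ (2 + t) ^ 2 := by nlinarith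
        calc (1 + τ ^ 2) * (1 + (t - τ) ^ 2) ≤ (1 + τ) ^ 2 * (2 + t) ^ 2 :=
              mul_le_mul hA hB (by positivity) (by positivity)
          _ = ((1 + τ) * (2 + t)) ^ 2 := by ring
    _ ≤ v1 t := by
        rw [intervalIntegral.integral_of_le (by linarith)]
        exact setIntegral_le_integral (integrable_v1Kernel t) (ae_of_all _ (v1Kernel_nonneg t))

noncomputable def logProfile (t : ℝ) : ℝ := (1 + log (1 + t)) / (1 + t)

section LogProfile

variable {x y t : ℝ}

lemma logProfile_pos (ht : 0 ≤ t) : 0 < logProfile t := by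
  have := log_nonneg (by linarith : 1 ≤ 1 + t)
  unfold logProfile; positivity

lemma inv_one_add_le_logProfile (ht : 0 ≤ t) : (1 + t)⁻¹ ≤ logProfile t := by
  rw [logProfile, inv_eq_one_div]
  gcongr
  linarith [log_nonneg (by linarith : 1 ≤ 1 + t)]

lemma logProfile_antitoneOn : AntitoneOn logProfile (Ici 0) := by
  intro u (hu : 0 ≤ u) w (hw : 0 ≤ w) huw
  have hLu := log_nonneg (by linarith : 1 ≤ 1 + u)
  have hdiff : (log (1 + w) - log (1 + u)) * (1 + u) ≤ w - u := by
    rw [← log_div (by linarith) (by linarith), ← le_div_iff₀ (by linarith)]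
    calc log ((1 + w) / (1 + u)) ≤ (1 + w) / (1 + u) - 1 := log_le_sub_one_of_pos (by positivity)
      _ = (w - u) / (1 + u) := by field_simp; ring
  rw [logProfile, logProfile, div_le_div_iff₀ (by linarith) (by linarith)]
  nlinarith

lemma logProfile_mul_le (hx : 0 ≤ x) (hy : 0 ≤ y) :
    logProfile x * logProfile y ≤ 2 * logProfile (x + y) := by
  wlog hyx : y ≤ x generalizing x y
  · rw [mul_comm, add_comm]
    exact this hy hx (by linarith)
  have hLy : log (1 + y) ≤ y := by linarith [log_le_sub_one_of_pos (by linarith : 0 < 1 + y)]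
  have hLx : 0 ≤ log (1 + x) := log_nonneg (by linarith)
  have hLy₀ : 0 ≤ log (1 + y) := log_nonneg (by linarith)
  have hLxy : log (1 + x) ≤ log (1 + (x + y)) := log_le_log (by linarith) (by linarith)
  have hsmall : (1 + log (1 + y)) * (1 + (x + y)) ≤ 2 * ((1 + x) * (1 + y)) := by nlinarith
  rw [logProfile, logProfile, logProfile, div_mul_div_comm, ← mul_div_assoc,
    div_le_div_iff₀ (by positivity) (by positivity)]
  calc (1 + log (1 + x)) * (1 + log (1 + y)) * (1 + (x + y))
      ≤ (1 + log (1 + (x + y))) * (2 * ((1 + x) * (1 + y))) := by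
        rw [mul_assoc]
        exact mul_le_mul (by linarith) hsmall (mul_nonneg (by linarith) (by linarith)) (by linarith)
    _ = 2 * (1 + log (1 + (x + y))) * ((1 + x) * (1 + y)) := by ring

lemma v1_le_logProfile (ht : 0 ≤ t) : v1 t ≤ 12 * logProfile t := by
  rcases le_total t 2 with hsmall | hlarge
  · have : 4 ≤ 12 * (1 + t)⁻¹ := by
      rw [← div_eq_mul_inv, le_div_iff₀ (by linarith)]
      linarith
    linarith [v1_le_pi t, pi_lt_four, inv_one_add_le_logProfile ht]
  · have hL := log_nonneg (by linarith : 1 ≤ 1 + t)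
    calc v1 t ≤ 4 * (1 + 2 * log (1 + t)) / t := v1_le_of_pos (by linarith)
      _ ≤ 12 * logProfile t := by
        rw [logProfile, mul_div_assoc', div_le_div_iff₀ (by linarith) (by linarith)]
        nlinarith

lemma logProfile_le_v1 (ht : 0 ≤ t) : logProfile t ≤ 6 * v1 t := by
  have hlog2 : 1 ≤ 2 * log (2 + t) := by
    linarith [log_two_gt_d9, log_le_log (by norm_num : (0 : ℝ) < 2) (by linarith : 2 ≤ 2 + t)]
  have hlog : log (1 + t) ≤ log (2 + t) := log_le_log (by linarith) (by linarith)
  calc logProfile t ≤ 6 * (log (2 + t) / (2 + t)) := by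
        rw [logProfile, mul_div_assoc', div_le_div_iff₀ (by linarith) (by linarith)]
        nlinarith
    _ ≤ 6 * v1 t := by linarith [log_div_le_v1 ht]

end LogProfile

lemma v1_mul_v1_le (x y : ℝ) : v1 x * v1 y ≤ 1728 * v1 (x + y) := by
  rw [← v1_abs x, ← v1_abs y, ← v1_abs (x + y)]
  have hx := abs_nonneg x
  have hy := abs_nonneg y
  calc v1 |x| * v1 |y| ≤ (12 * logProfile |x|) * (12 * logProfile |y|) :=
        mul_le_mul (v1_le_logProfile hx) (v1_le_logProfile hy) (v1_nonneg _)
          (by linarith [logProfile_pos hx])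
    _ ≤ 288 * logProfile (|x| + |y|) := by nlinarith [logProfile_mul_le hx hy]
    _ ≤ 288 * logProfile |x + y| := by
        gcongr
        exact logProfile_antitoneOn (mem_Ici.2 (abs_nonneg _)) (mem_Ici.2 (add_nonneg hx hy))
          (abs_add_le x y)
    _ ≤ 1728 * v1 |x + y| := by linarith [logProfile_le_v1 (abs_nonneg (x + y))]

lemma v_eq_v1_arcosh (t : ℝ) : v t = v1 (arcosh t) := rfl

lemma v_cosh (s : ℝ) : v (cosh s) = v1 s := by
  rw [v_eq_v1_arcosh, ← cosh_abs, arcosh_cosh (abs_nonneg s), v1_abs]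

lemma add_div_two_mul_sqrt_mul_eq_cosh {p q : ℝ} (hp : 0 < p) (hq : 0 < q) :
    (p + q) / (2 * √(p * q)) = cosh ((log p - log q) / 2) := by
  rw [sub_div, ← log_sqrt hp.le, ← log_sqrt hq.le, ← log_div (by positivity) (by positivity),
    cosh_log (by positivity), sqrt_mul hp.le]
  have hp' := sq_sqrt hp.le
  have hq' := sq_sqrt hq.le
  field_simp
  nlinarith

theorem v_product_bound (ε : ℝ) (hε : ε ∈ Set.Ioo (0 : ℝ) 1) :
    ∃ c₃ : ℝ, 0 < c₃ ∧ ∀ a y₁ y₂ : ℝ, ε ≤ a → a ≤ 1 → 0 < y₁ → 0 < y₂ → y₁ + y₂ ≤ 1 →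
      v ((y₁ + a) / (2 * Real.sqrt (y₁ * a))) * v ((a + y₂) / (2 * Real.sqrt (a * y₂))) ≤
        c₃ * v ((y₁ + y₂) / (2 * Real.sqrt (y₁ * y₂))) := by
  refine ⟨1728, by norm_num, fun a y₁ y₂ hεa _ hy₁ hy₂ _ => ?_⟩
  have ha : 0 < a := hε.1.trans_le hεa
  rw [add_div_two_mul_sqrt_mul_eq_cosh hy₁ ha, add_div_two_mul_sqrt_mul_eq_cosh ha hy₂,
    add_div_two_mul_sqrt_mul_eq_cosh hy₁ hy₂, v_cosh, v_cosh, v_cosh]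
  convert v1_mul_v1_le ((log y₁ - log a) / 2) ((log a - log y₂) / 2) using 3
  ring
end
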